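/- Let k be a quasi-complete totally ordered rational tropical semifield and let α : M → N be an injective homomorphism of straight pre-reflexive k-modules. Suppose that M has a basis and that N is finitely generated. Then M is finitely generated. -/

import Mathlib

/-! # Tropical semifields and tropical modules -/

/-- A tropical semifield: a commutative semiring with idempotent addition
(`⊕` is `+`, `⊙` is `*`, the zero element `−∞` is `0`, the unity is `1`)
in which every nonzero element has a multiplicative inverse. -/
class TropSemifield (k : Type*) extends CommSemiring k where
  add_idem : ∀ a : k, a + a = a
  exists_inv : ∀ a : k, a ≠ 0 → ∃ b : k, a * b = 1

/-- A tropical semigroup: commutative idempotent monoid, written additively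
(the zero element is `−∞`). -/
class TropSemigroup (M : Type*) extends AddCommMonoid M where
  add_idem : ∀ v : M, v + v = v

/-- A module over a tropical semifield. -/
class TropModule (k : Type*) (M : Type*) [TropSemifield k] [TropSemigroup M] extends
    SMul k M where
  mul_smul : ∀ (a b : k) (v : M), (a * b) • v = a • b • v
  one_smul : ∀ v : M, (1 : k) • v = v
  add_smul : ∀ (a b : k) (v : M), (a + b) • v = a • v + b • v
  smul_add : ∀ (a : k) (v w : M), a • (v + w) = a • v + a • w
  zero_smul : ∀ v : M, (0 : k) • v = 0
  smul_zero : ∀ a : k, a • (0 : M) = 0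

/-- The canonical partial order `v ≤ w ↔ v ⊕ w = w`. -/
def tle {M : Type*} [Add M] (v w : M) : Prop := v + w = w

/-- Strict version of the canonical order. -/
def tlt {M : Type*} [Add M] (v w : M) : Prop := tle v w ∧ v ≠ w

/-- The canonical order of `k` is total. -/
def TotallyOrderedTSF (k : Type*) [TropSemifield k] : Prop :=
  ∀ a b : k, tle a b ∨ tle b a

/-- Every nonempty subset of `k` admits an infimum. -/
def QuasiCompleteTSF (k : Type*) [TropSemifield k] : Prop :=
  ∀ S : Set k, S.Nonempty →
    ∃ c : k, (∀ x ∈ S, tle c x) ∧ ∀ d : k, (∀ x ∈ S, tle d x) → tle d c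

/-- `k` is rational: `m`-th roots exist and `k` has no maximum element. -/
def RationalTSF (k : Type*) [TropSemifield k] : Prop :=
  (∀ (a : k) (m : ℕ), m ≠ 0 → ∃ b : k, b ^ m = a) ∧ ∀ a : k, ∃ b : k, tlt a b

instance (priority := 100) TropSemifield.toTropSemigroup (k : Type*) [TropSemifield k] :
    TropSemigroup k :=
  { (inferInstance : AddCommMonoid k) with add_idem := TropSemifield.add_idem }

instance TropModule.self (k : Type*) [TropSemifield k] : TropModule k k :=
  { (inferInstance : SMul k k) with
    mul_smul := fun a b v => mul_assoc a b v
    one_smul := fun v => one_mul v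
    add_smul := fun a b v => add_mul a b v
    smul_add := fun a v w => mul_add a v w
    zero_smul := fun v => zero_mul v
    smul_zero := fun a => mul_zero a }

instance TropSemigroup.pi {ι : Type*} (M : Type*) [TropSemigroup M] :
    TropSemigroup (ι → M) :=
  { Pi.addCommMonoid with add_idem := fun v => funext fun i => TropSemigroup.add_idem (v i) }

instance TropModule.pi (k : Type*) {ι : Type*} (M : Type*) [TropSemifield k] [TropSemigroup M]
    [TropModule k M] : TropModule k (ι → M) where
  smul a v := fun i => a • v i
  mul_smul a b v := funext fun i => TropModule.mul_smul a b (v i)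
  one_smul v := funext fun i => TropModule.one_smul (v i)
  add_smul a b v := funext fun i => TropModule.add_smul a b (v i)
  smul_add a v w := funext fun i => TropModule.smul_add a (v i) (w i)
  zero_smul v := funext fun i => TropModule.zero_smul (v i)
  smul_zero a := funext fun i => TropModule.smul_zero (a := a)

/-! ## Homomorphisms of tropical modules -/

/-- A homomorphism of `k`-modules. -/
structure TropHom (k : Type*) (M : Type*) (N : Type*) [TropSemifield k] [TropSemigroup M]
    [TropModule k M] [TropSemigroup N] [TropModule k N] where
  toFun : M → N
  map_zero' : toFun 0 = 0
  map_add' : ∀ v w : M, toFun (v + w) = toFun v + toFun w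
  map_smul' : ∀ (a : k) (v : M), toFun (a • v) = a • toFun v

namespace TropHom

variable {k M N : Type*} [TropSemifield k] [TropSemigroup M] [TropModule k M]
  [TropSemigroup N] [TropModule k N]

theorem ext' {f g : TropHom k M N} (h : ∀ v, f.toFun v = g.toFun v) : f = g := by
  cases f; cases g
  simp only [mk.injEq]
  exact funext h

instance : Zero (TropHom k M N) :=
  ⟨⟨fun _ => 0, rfl, fun _ _ => (add_zero (0 : N)).symm,
    fun a _ => (TropModule.smul_zero (M := N) a).symm⟩⟩

instance : Add (TropHom k M N) :=
  ⟨fun f g =>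
    { toFun := fun v => f.toFun v + g.toFun v
      map_zero' := by
        show f.toFun 0 + g.toFun 0 = 0
        rw [f.map_zero', g.map_zero', add_zero]
      map_add' := fun v w => by
        show f.toFun (v + w) + g.toFun (v + w) =
          (f.toFun v + g.toFun v) + (f.toFun w + g.toFun w)
        rw [f.map_add', g.map_add', add_add_add_comm]
      map_smul' := fun a v => by
        show f.toFun (a • v) + g.toFun (a • v) = a • (f.toFun v + g.toFun v)
        rw [f.map_smul', g.map_smul', TropModule.smul_add] }⟩

instance : SMul k (TropHom k M N) :=
  ⟨fun a f =>
    { toFun := fun v => a • f.toFun v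
      map_zero' := by
        show a • f.toFun 0 = 0
        rw [f.map_zero', TropModule.smul_zero]
      map_add' := fun v w => by
        show a • f.toFun (v + w) = a • f.toFun v + a • f.toFun w
        rw [f.map_add', TropModule.smul_add]
      map_smul' := fun b v => by
        show a • f.toFun (b • v) = b • (a • f.toFun v)
        rw [f.map_smul', ← TropModule.mul_smul, ← TropModule.mul_smul, mul_comm a b] }⟩

instance : TropSemigroup (TropHom k M N) where
  add := (· + ·)
  zero := 0
  add_assoc f g h := ext' fun v => add_assoc (f.toFun v) (g.toFun v) (h.toFun v)
  zero_add f := ext' fun v => zero_add (f.toFun v)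
  add_zero f := ext' fun v => add_zero (f.toFun v)
  add_comm f g := ext' fun v => add_comm (f.toFun v) (g.toFun v)
  nsmul := nsmulRec
  add_idem f := ext' fun v => TropSemigroup.add_idem (f.toFun v)

instance : TropModule k (TropHom k M N) where
  smul := (· • ·)
  mul_smul a b f := ext' fun v => TropModule.mul_smul a b (f.toFun v)
  one_smul f := ext' fun v => TropModule.one_smul (f.toFun v)
  add_smul a b f := ext' fun v => TropModule.add_smul a b (f.toFun v)
  smul_add a f g := ext' fun v => TropModule.smul_add a (f.toFun v) (g.toFun v)
  zero_smul f := ext' fun v => TropModule.zero_smul (f.toFun v)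
  smul_zero a := ext' fun v => TropModule.smul_zero (M := N) a

end TropHom

/-- The canonical map `M → (M∨)∨`, `v ↦ (ξ ↦ ⟨v, ξ⟩)`. -/
def iotaFun (k : Type*) (M : Type*) [TropSemifield k] [TropSemigroup M] [TropModule k M] :
    M → TropHom k (TropHom k M k) k :=
  fun v => ⟨fun ξ => ξ.toFun v, rfl, fun ξ η => rfl, fun a ξ => rfl⟩

/-! ## Order-theoretic notions -/

/-- `z` is the infimum of `v` and `w` w.r.t. the canonical order. -/
def IsTInf {M : Type*} [Add M] (v w z : M) : Prop :=
  tle z v ∧ tle z w ∧ ∀ y : M, tle y v → tle y w → tle y z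

/-- A tropical module is straight if it is a finitely distributive ordered lattice. -/
def Straight (M : Type*) [Add M] : Prop :=
  (∀ v w : M, ∃ z : M, IsTInf v w z) ∧
    ∀ v₁ v₂ w z₁ z₂ : M, IsTInf v₁ w z₁ → IsTInf v₂ w z₂ → IsTInf (v₁ + v₂) w (z₁ + z₂)

/-- Infimum of `v` and `w` within the subset `N`. -/
def IsTInfOn {M : Type*} [Add M] (N : Set M) (v w z : M) : Prop :=
  tle z v ∧ tle z w ∧ ∀ y ∈ N, tle y v → tle y w → tle y z

/-- A submodule (viewed as a subset) is straight. -/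
def StraightSet {M : Type*} [Add M] (N : Set M) : Prop :=
  (∀ v ∈ N, ∀ w ∈ N, ∃ z ∈ N, IsTInfOn N v w z) ∧
    ∀ v₁ ∈ N, ∀ v₂ ∈ N, ∀ w ∈ N, ∀ z₁ ∈ N, ∀ z₂ ∈ N,
      IsTInfOn N v₁ w z₁ → IsTInfOn N v₂ w z₂ → IsTInfOn N (v₁ + v₂) w (z₁ + z₂)

/-! ## Generation, bases, extremal elements -/

/-- `S` generates the `k`-module `M`. -/
def TGenerates (k : Type*) {M : Type*} [TropSemifield k] [TropSemigroup M] [TropModule k M]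
    (S : Set M) : Prop :=
  ∀ v : M, ∃ (r : ℕ) (a : Fin r → k) (x : Fin r → M), (∀ i, x i ∈ S) ∧ v = ∑ i, a i • x i

/-- `M` is finitely generated. -/
def TFG (k : Type*) (M : Type*) [TropSemifield k] [TropSemigroup M] [TropModule k M] : Prop :=
  ∃ S : Finset M, TGenerates k (↑S : Set M)

/-- A basis: a generating set no proper subset of which generates. -/
def TBasis (k : Type*) {M : Type*} [TropSemifield k] [TropSemigroup M] [TropModule k M]
    (S : Set M) : Prop :=
  TGenerates k S ∧ ∀ T : Set M, T ⊂ S → ¬ TGenerates k T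

/-- `S` generates the subset `N` (viewed as a submodule of `M`). -/
def TGeneratesOn (k : Type*) {M : Type*} [TropSemifield k] [TropSemigroup M] [TropModule k M]
    (N S : Set M) : Prop :=
  ∀ v ∈ N, ∃ (r : ℕ) (a : Fin r → k) (x : Fin r → M), (∀ i, x i ∈ S) ∧ v = ∑ i, a i • x i

/-- A basis of the submodule `N ⊆ M`. -/
def TBasisOn (k : Type*) {M : Type*} [TropSemifield k] [TropSemigroup M] [TropModule k M]
    (N S : Set M) : Prop :=
  S ⊆ N ∧ TGeneratesOn k N S ∧ ∀ T : Set M, T ⊂ S → ¬ TGeneratesOn k N T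

/-- An extremal element. -/
def TExtremal {M : Type*} [Add M] [Zero M] (e : M) : Prop :=
  e ≠ 0 ∧ ∀ v w : M, v + w = e → v = e ∨ w = e

/-- The ray `k ⊙ e` generated by an element. -/
def tray (k : Type*) {M : Type*} [TropSemifield k] [TropSemigroup M] [TropModule k M]
    (e : M) : Set M :=
  Set.range fun a : k => a • e

/-- The set of extremal rays of `M`. -/
def extRays (k : Type*) (M : Type*) [TropSemifield k] [TropSemigroup M] [TropModule k M] :
    Set (Set M) :=
  {R : Set M | ∃ e : M, TExtremal e ∧ R = tray k e}

/-- The dimension of a straight reflexive module: the number of extremal rays. -/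
noncomputable def tdim (k : Type*) (M : Type*) [TropSemifield k] [TropSemigroup M]
    [TropModule k M] : ℕ :=
  (extRays k M).ncard

/-! ## Further notions on homomorphisms -/

/-- A lightly surjective homomorphism. -/
def LightlySurjective {k M N : Type*} [TropSemifield k] [TropSemigroup M] [TropModule k M]
    [TropSemigroup N] [TropModule k N] (α : TropHom k M N) : Prop :=
  ∀ w : N, ∃ v : M, tle w (α.toFun v)

/-- A lattice-preserving homomorphism. -/
def LatticePreserving {k M N : Type*} [TropSemifield k] [TropSemigroup M] [TropModule k M]
    [TropSemigroup N] [TropModule k N] (α : TropHom k M N) : Prop :=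
  ∀ v w : M, ∀ x : N, tle x (α.toFun v) → tle x (α.toFun w) →
    ∃ y : M, tle y v ∧ tle y w ∧ tle x (α.toFun y)

/-- The inclusion of the subset `N` into the ambient module is lattice-preserving. -/
def LatPresSet {M : Type*} [Add M] (N : Set M) : Prop :=
  ∀ v ∈ N, ∀ w ∈ N, ∀ x : M, tle x v → tle x w → ∃ y ∈ N, tle y v ∧ tle y w ∧ tle x y

/-- `η` is the dual element of `e`: `⟨e,η⟩ = 0` and
`⟨v,η⟩ ⊙ ⟨e,ξ⟩ ≤ ⟨v,ξ⟩` for all `v`, `ξ`. -/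
def IsDualElement {k M : Type*} [TropSemifield k] [TropSemigroup M] [TropModule k M]
    (e : M) (η : TropHom k M k) : Prop :=
  η.toFun e = 1 ∧ ∀ (v : M) (ξ : TropHom k M k), tle (η.toFun v * ξ.toFun e) (ξ.toFun v)

/-! ## Locators -/

/-- A locator of `M`: a lower-saturated subsemigroup of `(M, ⊕)` that generates `M`. -/
structure IsLocator (k : Type*) {M : Type*} [TropSemifield k] [TropSemigroup M] [TropModule k M]
    (S : Set M) : Prop where
  lower : ∀ v w : M, tle v w → w ∈ S → v ∈ S
  add_mem : ∀ v ∈ S, ∀ w ∈ S, v + w ∈ S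
  generates : TGenerates k S

/-- The multiplicative inverse `⊘a` (junk value `−∞` at `−∞`). -/
noncomputable def tinv {k : Type*} [TropSemifield k] (a : k) : k := by
  classical exact if h : a = 0 then 0 else Classical.choose (TropSemifield.exists_inv a h)

/-- Scalar multiplication on locators: `a ⊙̌ S = (⊘a) ⊙ S` for `a ≠ −∞`, `(−∞) ⊙̌ S = M`. -/
noncomputable def locSMul {k M : Type*} [TropSemifield k] [TropSemigroup M] [TropModule k M]
    (a : k) (S : Set M) : Set M := by
  classical exact if a = 0 then Set.univ else (fun v => tinv a • v) '' S

/-- `U` is the infimum of the locators `S`, `T` in `Loc(M)` (whose canonical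
order is reverse inclusion, the sum being intersection). -/
def IsLocInf (k : Type*) {M : Type*} [TropSemifield k] [TropSemigroup M] [TropModule k M]
    (S T U : Set M) : Prop :=
  IsLocator k U ∧ S ⊆ U ∧ T ⊆ U ∧
    ∀ W : Set M, IsLocator k W → S ⊆ W → T ⊆ W → U ⊆ W

/-! ## Submodules -/

/-- A subset of a `k`-module which is a submodule. -/
structure IsTSubmodule (k : Type*) {M : Type*} [TropSemifield k] [TropSemigroup M]
    [TropModule k M] (N : Set M) : Prop where
  zero_mem : (0 : M) ∈ N
  add_mem : ∀ v ∈ N, ∀ w ∈ N, v + w ∈ N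
  smul_mem : ∀ (a : k), ∀ v ∈ N, a • v ∈ N

/-- A bundled submodule of a `k`-module. -/
structure TSub (k : Type*) (M : Type*) [TropSemifield k] [TropSemigroup M] [TropModule k M] where
  carrier : Set M
  zero_mem : (0 : M) ∈ carrier
  add_mem : ∀ v ∈ carrier, ∀ w ∈ carrier, v + w ∈ carrier
  smul_mem : ∀ (a : k), ∀ v ∈ carrier, a • v ∈ carrier

instance TSub.instZero {k M : Type*} [TropSemifield k] [TropSemigroup M] [TropModule k M]
    (N : TSub k M) : Zero ↥N.carrier :=
  ⟨⟨0, N.zero_mem⟩⟩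

instance TSub.instAdd {k M : Type*} [TropSemifield k] [TropSemigroup M] [TropModule k M]
    (N : TSub k M) : Add ↥N.carrier :=
  ⟨fun v w => ⟨v.1 + w.1, N.add_mem v.1 v.2 w.1 w.2⟩⟩

instance TSub.instSMul {k M : Type*} [TropSemifield k] [TropSemigroup M] [TropModule k M]
    (N : TSub k M) : SMul k ↥N.carrier :=
  ⟨fun a v => ⟨a • v.1, N.smul_mem a v.1 v.2⟩⟩

instance TSub.semigroup {k M : Type*} [TropSemifield k] [TropSemigroup M] [TropModule k M]
    (N : TSub k M) : TropSemigroup ↥N.carrier where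
  add := (· + ·)
  zero := 0
  add_assoc a b c := Subtype.ext (add_assoc a.1 b.1 c.1)
  zero_add a := Subtype.ext (zero_add a.1)
  add_zero a := Subtype.ext (add_zero a.1)
  add_comm a b := Subtype.ext (add_comm a.1 b.1)
  nsmul := nsmulRec
  add_idem a := Subtype.ext (TropSemigroup.add_idem a.1)

instance TSub.module {k M : Type*} [TropSemifield k] [TropSemigroup M] [TropModule k M]
    (N : TSub k M) : TropModule k ↥N.carrier where
  smul := (· • ·)
  mul_smul a b v := Subtype.ext (TropModule.mul_smul a b v.1)
  one_smul v := Subtype.ext (TropModule.one_smul v.1)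
  add_smul a b v := Subtype.ext (TropModule.add_smul a b v.1)
  smul_add a v w := Subtype.ext (TropModule.smul_add a v.1 w.1)
  zero_smul v := Subtype.ext (TropModule.zero_smul v.1)
  smul_zero a := Subtype.ext (TropModule.smul_zero (M := M) a)

/-! ## Linear combinations -/

theorem tsmul_sum {k M : Type*} [TropSemifield k] [TropSemigroup M] [TropModule k M]
    (a : k) {ι : Type*} (s : Finset ι) (f : ι → M) :
    a • (∑ i ∈ s, f i) = ∑ i ∈ s, a • f i := by
  classical
  induction s using Finset.induction_on with
  | empty => simpa using TropModule.smul_zero (M := M) a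
  | insert _ _ h ih => rw [Finset.sum_insert h, Finset.sum_insert h, TropModule.smul_add, ih]

/-- The homomorphism `kⁿ → M` sending the `i`-th standard basis element to `e i`. -/
def linComb {k M : Type*} [TropSemifield k] [TropSemigroup M] [TropModule k M] {n : ℕ}
    (e : Fin n → M) : TropHom k (Fin n → k) M where
  toFun v := ∑ i, v i • e i
  map_zero' :=
    (Finset.sum_congr rfl fun i _ => TropModule.zero_smul (e i)).trans Finset.sum_const_zero
  map_add' v w := by
    rw [← Finset.sum_add_distrib]
    exact Finset.sum_congr rfl fun i _ => TropModule.add_smul (v i) (w i) (e i)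
  map_smul' a v := by
    rw [tsmul_sum]
    exact Finset.sum_congr rfl fun i _ => TropModule.mul_smul a (v i) (e i)

/-- The homomorphism `M → kⁿ` induced by an `n`-tuple of elements of `M∨`. -/
def dualTuple {k M : Type*} [TropSemifield k] [TropSemigroup M] [TropModule k M] {n : ℕ}
    (η : Fin n → TropHom k M k) : TropHom k M (Fin n → k) where
  toFun v := fun i => (η i).toFun v
  map_zero' := funext fun i => (η i).map_zero'
  map_add' v w := funext fun i => (η i).map_add' v w
  map_smul' a v := funext fun i => (η i).map_smul' a v

/-! Every element `e` of a basis of `M` is extremal: if `e = z₁ + z₂` with `zᵢ ≠ e`, write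
`zᵢ = uᵢ + bᵢ • e` with `uᵢ` in the span of the other basis elements; then `bᵢ < 1`, so by
totality `e = u + b • e` with `b < 1`, which forces `e = u` in a pre-reflexive module. In a
straight module an extremal element is join-prime.

For a nonzero generator `t` of `N` let `ν t w` be the largest `a` with `a • t ≤ w`, which exists
by quasi-completeness. Since `w = ∑ₜ ν t w • t`, primality of `e` and injectivity of `α` yield a
generator `t` such that `e` is the least `u` with `ν t (α e) ≤ ν t (α u)`. Two basis elements
attached to the same generator are then proportional, hence equal, so the basis injects into a
finite set of generators. -/

section Order

variable {M : Type*} [TropSemigroup M]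

theorem tle_refl (v : M) : tle v v := TropSemigroup.add_idem v

theorem tle.trans {u v w : M} (h₁ : tle u v) (h₂ : tle v w) : tle u w := by
  unfold tle at *
  rw [← h₂, ← add_assoc, h₁]

theorem tle.antisymm {v w : M} (h₁ : tle v w) (h₂ : tle w v) : v = w := by
  rw [← h₂, add_comm]
  exact h₁

theorem zero_tle (v : M) : tle 0 v := zero_add v

theorem tle.eq_zero {v : M} (h : tle v 0) : v = 0 := by
  rw [← h, add_zero]

theorem tle_add_left (v w : M) : tle v (v + w) := by
  unfold tle
  rw [← add_assoc, TropSemigroup.add_idem]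

theorem tle_add_right (v w : M) : tle w (v + w) := by
  unfold tle
  rw [add_left_comm, TropSemigroup.add_idem]

theorem add_tle {v w x : M} (h₁ : tle v x) (h₂ : tle w x) : tle (v + w) x := by
  unfold tle at *
  rw [add_assoc, h₂, h₁]

theorem add_tle_add {v v' w w' : M} (h₁ : tle v v') (h₂ : tle w w') :
    tle (v + w) (v' + w') := by
  unfold tle at *
  rw [add_add_add_comm, h₁, h₂]

theorem sum_tle {ι : Type*} {s : Finset ι} {f : ι → M} {x : M}
    (h : ∀ i ∈ s, tle (f i) x) : tle (∑ i ∈ s, f i) x := by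
  induction s using Finset.cons_induction with
  | empty => exact zero_tle x
  | cons a s ha ih =>
    rw [Finset.sum_cons]
    exact add_tle (h a (s.mem_cons_self a)) (ih fun i hi => h i (Finset.mem_cons_of_mem hi))

theorem sum_tle_sum {ι : Type*} {s : Finset ι} {f g : ι → M}
    (h : ∀ i ∈ s, tle (f i) (g i)) : tle (∑ i ∈ s, f i) (∑ i ∈ s, g i) := by
  induction s using Finset.cons_induction with
  | empty => exact tle_refl 0
  | cons a s ha ih =>
    rw [Finset.sum_cons, Finset.sum_cons]
    exact add_tle_add (h a (s.mem_cons_self a)) (ih fun i hi => h i (Finset.mem_cons_of_mem hi))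

theorem single_tle_sum {ι : Type*} {s : Finset ι} (f : ι → M) {i : ι} (hi : i ∈ s) :
    tle (f i) (∑ j ∈ s, f j) := by
  classical
  rw [← Finset.add_sum_erase s f hi]
  exact tle_add_left _ _

end Order

section Semifield

variable {k : Type*} [TropSemifield k]

theorem mul_tle_mul_left {a b : k} (c : k) (h : tle a b) : tle (c * a) (c * b) := by
  unfold tle at *
  rw [← mul_add, h]

theorem mul_tinv {a : k} (h : a ≠ 0) : a * tinv a = 1 := by
  rw [tinv, dif_neg h]
  exact Classical.choose_spec (TropSemifield.exists_inv a h)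

theorem tle_of_mul_tle_mul_right {a b c : k} (hc : c ≠ 0) (h : tle (a * c) (b * c)) :
    tle a b := by
  have := mul_tle_mul_left (tinv c) h
  rwa [mul_comm (tinv c), mul_comm (tinv c), mul_assoc, mul_assoc, mul_tinv hc, mul_one,
    mul_one] at this

theorem mul_tle_mul_right {a b : k} (c : k) (h : tle a b) : tle (a * c) (b * c) := by
  rw [mul_comm a, mul_comm b]
  exact mul_tle_mul_left c h

theorem add_tlt (hto : TotallyOrderedTSF k) {a b c : k} (ha : tlt a c) (hb : tlt b c) :
    tlt (a + b) c := by
  rcases hto a b with h | h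
  · rwa [h]
  · rwa [add_comm, h]

theorem eq_of_eq_add_mul (hto : TotallyOrderedTSF k) {b x y : k} (hb : tlt b 1)
    (h : x = y + b * x) : x = y := by
  rcases hto y (b * x) with hyx | hxy
  · rw [hyx] at h
    by_cases hx : x = 0
    · rw [hx, mul_zero] at hyx
      rw [hx, hyx.eq_zero]
    · refine absurd ?_ hb.2
      simpa only [mul_assoc, mul_tinv hx, one_mul, mul_one] using
        (congrArg (· * tinv x) h).symm
  · rwa [add_comm, hxy] at h

end Semifield

section Module

variable {k M : Type*} [TropSemifield k] [TropSemigroup M] [TropModule k M]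

theorem smul_tle_smul_left (a : k) {v w : M} (h : tle v w) : tle (a • v) (a • w) := by
  unfold tle at *
  rw [← TropModule.smul_add, h]

theorem smul_tle_smul_right {a b : k} (v : M) (h : tle a b) : tle (a • v) (b • v) := by
  unfold tle at *
  rw [← TropModule.add_smul, h]

theorem tinv_smul_smul {a : k} (ha : a ≠ 0) (v : M) : tinv a • a • v = v := by
  rw [← TropModule.mul_smul, mul_comm, mul_tinv ha, TropModule.one_smul]

theorem eq_zero_of_smul_eq_zero {a : k} {v : M} (ha : a ≠ 0) (h : a • v = 0) : v = 0 := by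
  rw [← tinv_smul_smul ha v, h, TropModule.smul_zero]

end Module

namespace TropHom

variable {k M N : Type*} [TropSemifield k] [TropSemigroup M] [TropModule k M]
  [TropSemigroup N] [TropModule k N]

theorem map_tle (f : TropHom k M N) {v w : M} (h : tle v w) : tle (f.toFun v) (f.toFun w) := by
  unfold tle at *
  rw [← f.map_add', h]

theorem tle_of_map_tle {f : TropHom k M N} (hf : Function.Injective f.toFun) {v w : M}
    (h : tle (f.toFun v) (f.toFun w)) : tle v w :=
  hf (by rw [f.map_add']; exact h)

theorem map_sum (f : TropHom k M N) {ι : Type*} (s : Finset ι) (g : ι → M) :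
    f.toFun (∑ i ∈ s, g i) = ∑ i ∈ s, f.toFun (g i) := by
  induction s using Finset.cons_induction with
  | empty => exact f.map_zero'
  | cons a s ha ih => rw [Finset.sum_cons, Finset.sum_cons, f.map_add', ih]

end TropHom

section PreReflexive

variable {k M : Type*} [TropSemifield k] [TropSemigroup M] [TropModule k M]

theorem eq_of_forall_hom_eq (hpre : Function.Injective (iotaFun k M)) {v w : M}
    (h : ∀ ξ : TropHom k M k, ξ.toFun v = ξ.toFun w) : v = w :=
  hpre (TropHom.ext' h)

theorem tle_of_forall_hom_tle (hpre : Function.Injective (iotaFun k M)) {v w : M}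
    (h : ∀ ξ : TropHom k M k, tle (ξ.toFun v) (ξ.toFun w)) : tle v w :=
  eq_of_forall_hom_eq hpre fun ξ => by rw [ξ.map_add']; exact h ξ

theorem exists_hom_ne_zero (hpre : Function.Injective (iotaFun k M)) {e : M} (he : e ≠ 0) :
    ∃ ζ : TropHom k M k, ζ.toFun e ≠ 0 := by
  by_contra! h
  exact he (eq_of_forall_hom_eq hpre fun ξ => by rw [h ξ, ξ.map_zero'])

theorem tle_of_smul_tle_smul (hpre : Function.Injective (iotaFun k M)) {e : M} (he : e ≠ 0)
    {a b : k} (h : tle (a • e) (b • e)) : tle a b := by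
  obtain ⟨ζ, hζ⟩ := exists_hom_ne_zero hpre he
  have := ζ.map_tle h
  rw [ζ.map_smul', ζ.map_smul'] at this
  exact tle_of_mul_tle_mul_right hζ this

theorem eq_of_eq_add_smul (hto : TotallyOrderedTSF k) (hpre : Function.Injective (iotaFun k M))
    {b : k} (hb : tlt b 1) {e u : M} (h : e = u + b • e) : e = u :=
  eq_of_forall_hom_eq hpre fun ξ =>
    eq_of_eq_add_mul hto hb (by rw [← smul_eq_mul, ← ξ.map_smul', ← ξ.map_add', ← h])

end PreReflexive

section Saturation

variable {k M : Type*} [TropSemifield k] [TropSemigroup M] [TropModule k M]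

def IsSat (e u : M) (c : k) : Prop :=
  tle (c • e) u ∧ ∀ a : k, tle (a • e) u → tle a c

theorem IsSat.unique {e u : M} {c c' : k} (h : IsSat e u c) (h' : IsSat e u c') : c = c' :=
  (h'.2 c h.1).antisymm (h.2 c' h'.1)

theorem IsSat.smul {e u : M} {c : k} (h : IsSat e u c) (he : e ≠ 0) (a : k) :
    IsSat e (a • u) (a * c) := by
  refine ⟨by rw [TropModule.mul_smul]; exact smul_tle_smul_left a h.1, fun b hb => ?_⟩
  by_cases ha : a = 0
  · subst ha
    rw [TropModule.zero_smul] at hb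
    by_cases hb0 : b = 0
    · rw [hb0]
      exact zero_tle _
    · exact absurd (eq_zero_of_smul_eq_zero hb0 hb.eq_zero) he
  · have hle : tle (tinv a * b) c :=
      h.2 _ (by simpa only [TropModule.mul_smul, tinv_smul_smul ha] using
        smul_tle_smul_left (tinv a) hb)
    simpa only [← mul_assoc, mul_tinv ha, one_mul] using mul_tle_mul_left a hle

theorem sat_smul {e : M} (he : e ≠ 0) {F : M → k} (hF : ∀ u, IsSat e u (F u)) (a : k) (u : M) :
    F (a • u) = a * F u :=
  (hF (a • u)).unique ((hF u).smul he a)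

/-- The candidate `ξ u / ξ e` bounds every `a` with `a • e ≤ u`; the infimum of these bounds
over all `ξ` with `ξ e ≠ 0` is the saturation value. -/
theorem exists_isSat (hqc : QuasiCompleteTSF k) (hpre : Function.Injective (iotaFun k M))
    {e : M} (he : e ≠ 0) (u : M) : ∃ c : k, IsSat e u c := by
  have hbound : ∀ ξ : TropHom k M k, ξ.toFun e ≠ 0 →
      ∀ a : k, tle (a • e) u → tle a (ξ.toFun u * tinv (ξ.toFun e)) := by
    intro ξ hξ a ha
    apply tle_of_mul_tle_mul_right hξ
    rw [mul_assoc, mul_comm (tinv _), mul_tinv hξ, mul_one, ← smul_eq_mul, ← ξ.map_smul']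
    exact ξ.map_tle ha
  obtain ⟨ζ, hζ⟩ := exists_hom_ne_zero hpre he
  obtain ⟨c, hc_low, hc_great⟩ := hqc {d | ∀ a : k, tle (a • e) u → tle a d} ⟨_, hbound ζ hζ⟩
  refine ⟨c, tle_of_forall_hom_tle hpre fun ξ => ?_, fun a ha => hc_great a fun d hd => hd a ha⟩
  rw [ξ.map_smul', smul_eq_mul]
  by_cases hξ : ξ.toFun e = 0
  · rw [hξ, mul_zero]
    exact zero_tle _
  · have := mul_tle_mul_right (ξ.toFun e) (hc_low _ (hbound ξ hξ))
    rwa [mul_assoc, mul_comm (tinv _), mul_tinv hξ, mul_one] at this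

end Saturation

section Span

variable {k M : Type*} [TropSemifield k] [TropSemigroup M] [TropModule k M]

variable (k) in
def tspan (T : Set M) : Set M :=
  {v | ∃ (r : ℕ) (a : Fin r → k) (x : Fin r → M), (∀ i, x i ∈ T) ∧ v = ∑ i, a i • x i}

theorem zero_mem_tspan (T : Set M) : (0 : M) ∈ tspan k T :=
  ⟨0, Fin.elim0, Fin.elim0, fun i => i.elim0, by simp⟩

theorem subset_tspan (T : Set M) : T ⊆ tspan k T := fun x hx =>
  ⟨1, fun _ => 1, fun _ => x, fun _ => hx, by simp [TropModule.one_smul]⟩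

theorem smul_mem_tspan {T : Set M} (a : k) {v : M} (hv : v ∈ tspan k T) : a • v ∈ tspan k T := by
  obtain ⟨r, b, x, hx, rfl⟩ := hv
  refine ⟨r, fun i => a * b i, x, hx, ?_⟩
  rw [tsmul_sum]
  exact Finset.sum_congr rfl fun i _ => (TropModule.mul_smul a (b i) (x i)).symm

theorem add_mem_tspan {T : Set M} {v w : M} (hv : v ∈ tspan k T) (hw : w ∈ tspan k T) :
    v + w ∈ tspan k T := by
  obtain ⟨r, a, x, hx, rfl⟩ := hv
  obtain ⟨s, b, y, hy, rfl⟩ := hw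
  refine ⟨r + s, Fin.append a b, Fin.append x y, Fin.addCases (by simpa) (by simpa), ?_⟩
  simp [Fin.sum_univ_add]

theorem tspan_induction {T : Set M} {p : M → Prop} (zero : p 0) (mem : ∀ x ∈ T, p x)
    (add : ∀ v w, p v → p w → p (v + w)) (smul : ∀ (a : k) v, p v → p (a • v)) {v : M}
    (hv : v ∈ tspan k T) : p v := by
  obtain ⟨r, a, x, hx, rfl⟩ := hv
  induction r with
  | zero => simpa using zero
  | succ r ih =>
    rw [Fin.sum_univ_succ]
    exact add _ _ (smul _ _ (mem _ (hx 0))) (ih _ _ fun i => hx i.succ)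

theorem tspan_subset_tspan {S T : Set M} (h : S ⊆ tspan k T) : tspan k S ⊆ tspan k T :=
  fun _ => tspan_induction (zero_mem_tspan T) h (fun _ _ => add_mem_tspan)
    (fun a _ => smul_mem_tspan a)

theorem TGenerates.of_subset_tspan {S T : Set M} (hS : TGenerates k S) (h : S ⊆ tspan k T) :
    TGenerates k T :=
  fun v => tspan_subset_tspan h (hS v)

theorem TGenerates.diff_zero {S : Set M} (hS : TGenerates k S) : TGenerates k (S \ {0}) :=
  hS.of_subset_tspan fun x hx => by
    by_cases hx0 : x = 0
    · rw [hx0]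
      exact zero_mem_tspan _
    · exact subset_tspan _ ⟨hx, hx0⟩

theorem exists_eq_add_smul_of_mem_tspan {S : Set M} (e : M) {z : M} (hz : z ∈ tspan k S) :
    ∃ u ∈ tspan k (S \ {e}), ∃ b : k, z = u + b • e := by
  refine tspan_induction (p := fun z => ∃ u ∈ tspan k (S \ {e}), ∃ b : k, z = u + b • e)
    ⟨0, zero_mem_tspan _, 0, by rw [TropModule.zero_smul, add_zero]⟩ (fun x hx => ?_) ?_ ?_ hz
  · by_cases hxe : x = e
    · exact ⟨0, zero_mem_tspan _, 1, by rw [zero_add, TropModule.one_smul, hxe]⟩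
    · exact ⟨x, subset_tspan _ ⟨hx, hxe⟩, 0, by rw [TropModule.zero_smul, add_zero]⟩
  · rintro v w ⟨u, hu, b, rfl⟩ ⟨u', hu', b', rfl⟩
    exact ⟨u + u', add_mem_tspan hu hu', b + b', by
      rw [TropModule.add_smul, add_add_add_comm]⟩
  · rintro a v ⟨u, hu, b, rfl⟩
    exact ⟨a • u, smul_mem_tspan a hu, a * b, by
      rw [TropModule.smul_add, TropModule.mul_smul]⟩

theorem tle_sum_smul_of_isSat {T : Finset M} (hT : TGenerates k (T : Set M)) {ν : M → M → k}
    (hν : ∀ t ∈ T, ∀ w, IsSat t w (ν t w)) (w : M) : tle w (∑ t ∈ T, ν t w • t) := by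
  obtain ⟨r, a, x, hx, hw⟩ := hT w
  conv_lhs => rw [hw]
  refine sum_tle fun i _ => (smul_tle_smul_right (x i) ((hν _ (hx i) w).2 _ ?_)).trans
    (single_tle_sum (fun t => ν t w • t) (hx i))
  rw [hw]
  exact single_tle_sum (fun i => a i • x i) (Finset.mem_univ i)

end Span

section Basis

variable {k M : Type*} [TropSemifield k] [TropSemigroup M] [TropModule k M] {S : Set M}

theorem TBasis.notMem_tspan_diff (hS : TBasis k S) {e : M} (he : e ∈ S) :
    e ∉ tspan k (S \ {e}) := fun hspan =>
  hS.2 _ (Set.sdiff_singleton_ssubset.mpr he) <| hS.1.of_subset_tspan fun x hx => by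
    by_cases hxe : x = e
    · exact hxe ▸ hspan
    · exact subset_tspan _ ⟨hx, hxe⟩

theorem TBasis.ne_zero (hS : TBasis k S) {e : M} (he : e ∈ S) : e ≠ 0 := fun h0 =>
  hS.notMem_tspan_diff he (h0 ▸ zero_mem_tspan _)

theorem TBasis.eq_of_eq_smul (hS : TBasis k S) {e f : M} (he : e ∈ S) (hf : f ∈ S) {a : k}
    (h : e = a • f) : e = f := by
  by_contra hef
  have hmem : a • f ∈ tspan k (S \ {e}) := smul_mem_tspan a (subset_tspan _ ⟨hf, Ne.symm hef⟩)
  rw [← h] at hmem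
  exact hS.notMem_tspan_diff he hmem

theorem TBasis.extremal (hto : TotallyOrderedTSF k) (hpre : Function.Injective (iotaFun k M))
    (hS : TBasis k S) {e : M} (he : e ∈ S) : TExtremal e := by
  have he0 := hS.ne_zero he
  refine ⟨he0, fun z₁ z₂ hz => ?_⟩
  obtain ⟨u₁, hu₁, b₁, hz₁⟩ := exists_eq_add_smul_of_mem_tspan e (hS.1 z₁)
  obtain ⟨u₂, hu₂, b₂, hz₂⟩ := exists_eq_add_smul_of_mem_tspan e (hS.1 z₂)
  have hcoeff : ∀ {z u : M} {b : k}, tle z e → z = u + b • e → z = e ∨ tlt b 1 := by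
    intro z u b hze hz
    have hbe : tle (b • e) e := (hz ▸ tle_add_right u (b • e)).trans hze
    by_cases hb : b = 1
    · rw [hb, TropModule.one_smul] at hz
      exact Or.inl (hze.antisymm (hz ▸ tle_add_right u e))
    · refine Or.inr ⟨tle_of_smul_tle_smul hpre he0 ?_, hb⟩
      rwa [TropModule.one_smul]
  rcases hcoeff (hz ▸ tle_add_left z₁ z₂) hz₁ with h₁ | hb₁
  · exact Or.inl h₁
  rcases hcoeff (hz ▸ tle_add_right z₁ z₂) hz₂ with h₂ | hb₂
  · exact Or.inr h₂
  have heu : e = (u₁ + u₂) + (b₁ + b₂) • e := by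
    calc e = z₁ + z₂ := hz.symm
      _ = _ := by rw [hz₁, hz₂, TropModule.add_smul, add_add_add_comm]
  have hmem := add_mem_tspan hu₁ hu₂
  rw [← eq_of_eq_add_smul hto hpre (add_tlt hto hb₁ hb₂) heu] at hmem
  exact absurd hmem (hS.notMem_tspan_diff he)

end Basis

section Prime

variable {k M : Type*} [TropSemifield k] [TropSemigroup M] [TropModule k M]

def TSupPrime (e : M) : Prop :=
  e ≠ 0 ∧ ∀ v w : M, tle e (v + w) → tle e v ∨ tle e w

theorem TExtremal.supPrime (hMs : Straight M) {e : M} (he : TExtremal e) : TSupPrime e := by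
  refine ⟨he.1, fun v w hvw => ?_⟩
  obtain ⟨z₁, hz₁⟩ := hMs.1 v e
  obtain ⟨z₂, hz₂⟩ := hMs.1 w e
  have hz := hMs.2 v w e z₁ z₂ hz₁ hz₂
  have heq : z₁ + z₂ = e := hz.2.1.antisymm (hz.2.2 e hvw (tle_refl e))
  rcases he.2 z₁ z₂ heq with h | h
  · exact Or.inl (h ▸ hz₁.1)
  · exact Or.inr (h ▸ hz₂.1)

theorem TSupPrime.exists_tle_of_tle_sum {e : M} (he : TSupPrime e) {ι : Type*} {s : Finset ι}
    {f : ι → M} (h : tle e (∑ i ∈ s, f i)) : ∃ i ∈ s, tle e (f i) := by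
  induction s using Finset.cons_induction with
  | empty => exact absurd h.eq_zero he.1
  | cons a s ha ih =>
    rw [Finset.sum_cons] at h
    rcases he.2 _ _ h with h | h
    · exact ⟨a, s.mem_cons_self a, h⟩
    · obtain ⟨i, hi, hei⟩ := ih h
      exact ⟨i, Finset.mem_cons_of_mem hi, hei⟩

end Prime

section Detects

variable {k M : Type*} [TropSemifield k] [TropSemigroup M] [TropModule k M]

def Detects (φ : M → k) (e : M) : Prop :=
  ∀ u : M, tle (φ e) (φ u) → tle e u

theorem Detects.map_ne_zero {φ : M → k} (hφ : ∀ (a : k) u, φ (a • u) = a * φ u) {e : M}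
    (he : Detects φ e) (he0 : e ≠ 0) : φ e ≠ 0 := fun h => by
  have hφ0 : φ 0 = 0 := by rw [← TropModule.zero_smul (k := k) (0 : M), hφ, zero_mul]
  exact he0 (he 0 (by rw [h, hφ0]; exact tle_refl 0)).eq_zero

theorem Detects.eq_smul {φ : M → k} (hφ : ∀ (a : k) u, φ (a • u) = a * φ u) {e f : M}
    (he : Detects φ e) (hf : Detects φ f) (he0 : e ≠ 0) (hf0 : f ≠ 0) :
    e = (φ e * tinv (φ f)) • f := by
  have hφe := he.map_ne_zero hφ he0
  have hφf := hf.map_ne_zero hφ hf0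
  have hef : tle e ((φ e * tinv (φ f)) • f) := he _ <| by
    rw [hφ, mul_assoc, mul_comm (tinv _), mul_tinv hφf, mul_one]
    exact tle_refl _
  have hfe : tle f ((φ f * tinv (φ e)) • e) := hf _ <| by
    rw [hφ, mul_assoc, mul_comm (tinv _), mul_tinv hφe, mul_one]
    exact tle_refl _
  have hprod : φ e * tinv (φ f) * (φ f * tinv (φ e)) = 1 := by
    calc _ = φ e * tinv (φ e) * (φ f * tinv (φ f)) := by ring
      _ = 1 := by rw [mul_tinv hφe, mul_tinv hφf, one_mul]
  refine hef.antisymm ?_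
  simpa only [← TropModule.mul_smul, hprod, TropModule.one_smul] using
    smul_tle_smul_left (φ e * tinv (φ f)) hfe

theorem exists_detects {N : Type*} [TropSemigroup N] [TropModule k N] {α : TropHom k M N}
    (hinj : Function.Injective α.toFun) {e : M} (he : TSupPrime e) {T : Finset N}
    (hT : TGenerates k (T : Set N)) {ν : N → N → k} (hν : ∀ t ∈ T, ∀ w, IsSat t w (ν t w)) :
    ∃ t ∈ T, Detects (fun u => ν t (α.toFun u)) e := by
  by_contra! h
  simp only [Detects, not_forall] at h
  choose! u hu_level hu_not using h
  have hαe : tle (α.toFun e) (α.toFun (∑ t ∈ T, u t)) := by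
    rw [α.map_sum]
    refine (tle_sum_smul_of_isSat hT hν _).trans (sum_tle_sum fun t ht => ?_)
    exact (smul_tle_smul_right t (hu_level t ht)).trans ((hν t ht _).1)
  obtain ⟨t, ht, het⟩ := he.exists_tle_of_tle_sum (α.tle_of_map_tle hinj hαe)
  exact hu_not t ht het

end Detects

theorem stmt4_general {k M N : Type*} [TropSemifield k] [TropSemigroup M] [TropModule k M]
    [TropSemigroup N] [TropModule k N]
    (hto : TotallyOrderedTSF k) (hqc : QuasiCompleteTSF k)
    (hMs : Straight M)
    (hMpre : Function.Injective (iotaFun k M)) (hNpre : Function.Injective (iotaFun k N))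
    (α : TropHom k M N) (hinj : Function.Injective α.toFun)
    (hbasis : ∃ S : Set M, TBasis k S) (hNfg : TFG k N) :
    TFG k M := by
  classical
  obtain ⟨S, hS⟩ := hbasis
  obtain ⟨T₀, hT₀⟩ := hNfg
  set T := T₀.erase 0
  have hT : TGenerates k (T : Set N) := by rw [Finset.coe_erase]; exact hT₀.diff_zero
  have hT_ne : ∀ t ∈ T, t ≠ 0 := fun t ht => Finset.ne_of_mem_erase ht
  choose! ν hν using fun (t : N) (ht : t ≠ 0) (w : N) => exists_isSat hqc hNpre ht w
  have hνT : ∀ t ∈ T, ∀ w, IsSat t w (ν t w) := fun t ht => hν t (hT_ne t ht)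
  have hφ : ∀ t ∈ T, ∀ (a : k) u, ν t (α.toFun (a • u)) = a * ν t (α.toFun u) := by
    intro t ht a u
    rw [α.map_smul']
    exact sat_smul (hT_ne t ht) (hνT t ht) a _
  choose! τ hτT hτ using fun e (he : e ∈ S) =>
    exists_detects hinj ((hS.extremal hto hMpre he).supPrime hMs) hT hνT
  have hinjOn : Set.InjOn τ S := fun e he f hf hef =>
    hS.eq_of_eq_smul he hf <| (hτ e he).eq_smul (hφ _ (hτT e he)) (hef ▸ hτ f hf)
      (hS.ne_zero he) (hS.ne_zero hf)
  have hSfin : S.Finite :=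
    Set.Finite.of_finite_image (T.finite_toSet.subset (Set.image_subset_iff.2 hτT)) hinjOn
  exact ⟨hSfin.toFinset, by rw [hSfin.coe_toFinset]; exact hS.1⟩

theorem stmt4 {k M N : Type*} [TropSemifield k] [TropSemigroup M] [TropModule k M]
    [TropSemigroup N] [TropModule k N]
    (hto : TotallyOrderedTSF k) (hqc : QuasiCompleteTSF k) (hrat : RationalTSF k)
    (hMs : Straight M) (hNs : Straight N)
    (hMpre : Function.Injective (iotaFun k M)) (hNpre : Function.Injective (iotaFun k N))
    (α : TropHom k M N) (hinj : Function.Injective α.toFun)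
    (hbasis : ∃ S : Set M, TBasis k S) (hNfg : TFG k N) :
    TFG k M :=
  stmt4_general hto hqc hMs hMpre hNpre α hinj hbasis hNfg
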